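/- Let T be a marked tree. The components of T (L-components and 5-components) are pairwise vertex-disjoint; every L-component contains exactly two marked leaves, and every 5-component contains exactly five marked leaves. -/

import Mathlib

open SimpleGraph

/-- A set of indices of `Fin n` is *cyclically consecutive* (a cyclic interval). -/
def IsCyclicInterval {n : ℕ} (A : Set (Fin n)) : Prop :=
  ∃ a len : ℕ, A = {i : Fin n | ∃ j : ℕ, j < len ∧ (i : ℕ) = (a + j) % n}

/-- `j` is the cyclically next element of `M` after `i` (i.e. `i` and `j` are consecutive
elements of `M` in the cyclic order of `Fin n`). -/
def CyclicNextIn {n : ℕ} (M : Finset (Fin n)) (i j : Fin n) : Prop :=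
  i ∈ M ∧ j ∈ M ∧ ∃ d : ℕ, 0 < d ∧ (j : ℕ) = ((i : ℕ) + d) % n ∧
    ∀ t : ℕ, 0 < t → t < d → ∀ k : Fin n, (k : ℕ) = ((i : ℕ) + t) % n → k ∉ M

/-- A *marked tree*: a proper binary tree `T` (a finite tree with all degrees 1 or 3) together
with a planar cyclic ordering `ord` of its `n` leaves (planar: for every edge, the leaves in
each of the two components of `T` minus that edge are cyclically consecutive), a set `marked`
of marked leaves (given by their indices in the cyclic order), and for each marked leaf a
*neighborhood*: a subtree of `T` (a connected subgraph, identified with its vertex set)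
containing that leaf, such that any two marked leaves consecutive in the cyclic ordering
restricted to the marked leaves have vertex-disjoint neighborhoods. -/
structure MarkedTree (V : Type*) [Fintype V] where
  /-- the underlying graph -/
  T : SimpleGraph V
  /-- `T` is a tree -/
  isTree : T.IsTree
  /-- `T` is a proper binary tree: every vertex has degree 1 (a leaf) or degree 3 -/
  proper : ∀ v : V, Nat.card (T.neighborSet v) = 1 ∨ Nat.card (T.neighborSet v) = 3
  /-- the number of leaves -/
  n : ℕ
  /-- the cyclic ordering of the leaves -/
  ord : Fin n ≃ {v : V // Nat.card (T.neighborSet v) = 1}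
  /-- planarity of the cyclic ordering: for each edge `{u, w}`, the set of (indices of) leaves
  lying in the component of `u` in `T` minus the edge `{u, w}` is cyclically consecutive -/
  planar : ∀ u w : V, T.Adj u w →
    IsCyclicInterval {i : Fin n | (T.deleteEdges {s(u, w)}).Reachable u (ord i).1}
  /-- the indices of the marked leaves -/
  marked : Finset (Fin n)
  /-- the neighborhood of each (marked) leaf, as a set of vertices -/
  nh : Fin n → Set V
  /-- the neighborhood of a marked leaf contains that leaf -/
  nh_mem : ∀ i ∈ marked, (ord i).1 ∈ nh i
  /-- the neighborhood of a marked leaf is a subtree: it induces a connected subgraph -/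
  nh_conn : ∀ i ∈ marked, (T.induce (nh i)).Connected
  /-- consecutive marked leaves have vertex-disjoint neighborhoods -/
  consec_disjoint : ∀ i j : Fin n, i ≠ j → CyclicNextIn marked i j →
    Disjoint (nh i) (nh j)

namespace MarkedTree

variable {V : Type*} [Fintype V] (MT : MarkedTree V)

/-- `v` is a marked leaf (as a vertex of `T`). -/
def IsMarkedLeaf (v : V) : Prop :=
  ∃ i ∈ MT.marked, (MT.ord i).1 = v

/-- The neighbors `w` of `v` such that the connected component of `T − v` containing `w`
contains a marked leaf.  Their number is the degree of `v` in the minimal subtree `T_u`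
of `T` spanning the marked leaves (with degree-2 vertices suppressed), when `v` belongs
to that subtree. -/
def branchDirs (v : V) : Set V :=
  {w | MT.T.Adj v w ∧ ∃ ℓ, MT.IsMarkedLeaf ℓ ∧ ∃ p : MT.T.Walk w ℓ, v ∉ p.support}

/-- `v` is a *branch node*: an (internal) vertex of the tree `T_u` obtained from `T` by
deleting all unmarked leaves and suppressing degree-2 vertices, i.e. a vertex such that at
least 3 components of `T − v` contain marked leaves.  These are exactly the vertices of the
tree `T_u*` obtained from `T_u` by deleting its leaves (which are the marked leaves). -/
def IsBranchNode (v : V) : Prop :=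
  3 ≤ Nat.card (MT.branchDirs v)

/-- The marked leaves *attached* to `v`, i.e. the marked leaves that are neighbors of `v`
in the suppressed tree `T_u`: the path in `T` from `v` to such a leaf passes through no
other branch node. -/
def attached (v : V) : Set V :=
  {ℓ | MT.IsMarkedLeaf ℓ ∧ ∃ p : MT.T.Walk v ℓ, p.IsPath ∧
    ∀ w ∈ p.support, w ≠ v → w ≠ ℓ → ¬ MT.IsBranchNode w}

/-- `v` is an *L-node*: it has degree 1 in `T_u*`, i.e. it neighbors two (marked) leaves
in `T_u`. -/
def IsLNode (v : V) : Prop :=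
  MT.IsBranchNode v ∧ Nat.card (MT.attached v) = 2

/-- `v` is a *C-node*: it has degree 2 in `T_u*`, i.e. it neighbors one (marked) leaf
in `T_u`. -/
def IsCNode (v : V) : Prop :=
  MT.IsBranchNode v ∧ Nat.card (MT.attached v) = 1

/-- `v` is a *J-node*: it has degree 3 in `T_u*`, i.e. it neighbors no (marked) leaf
in `T_u`. -/
def IsJNode (v : V) : Prop :=
  MT.IsBranchNode v ∧ MT.attached v = ∅

/-- `v` is a *labeled* node of `T`. -/
def IsLabeled (v : V) : Prop :=
  MT.IsLNode v ∨ MT.IsCNode v ∨ MT.IsJNode v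

/-- Two C-nodes are *consecutive on a spine* if the path between them in `T` passes through
no other branch node (i.e. they are adjacent in `T_u*`). -/
def SpineAdj (u v : V) : Prop :=
  u ≠ v ∧ MT.IsCNode u ∧ MT.IsCNode v ∧ ∃ p : MT.T.Walk u v, p.IsPath ∧
    ∀ w ∈ p.support, w ≠ u → w ≠ v → ¬ MT.IsBranchNode w

/-- The union of the subtrees of `T` incident to `v` (connected components of `T − v`)
that contain no labeled node. -/
def hangSet (v : V) : Set V :=
  ⋃ w ∈ {w | MT.T.Adj v w ∧ ∀ u, (∃ p : MT.T.Walk w u, v ∉ p.support) → ¬ MT.IsLabeled u},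
    {u | ∃ p : MT.T.Walk w u, v ∉ p.support}

/-- The *L-component* defined by an L-node `lam`: `lam` together with the subtrees of `T`
incident to `lam` that contain no labeled node. -/
def LComponent (lam : V) : Set V :=
  insert lam (MT.hangSet lam)

/-- `K` is an L-component of `T`. -/
def IsLComponent (K : Set V) : Prop :=
  ∃ lam, MT.IsLNode lam ∧ K = MT.LComponent lam

/-- `K` is the *5-component* of `T` defined by the five successive C-nodes `c 0, …, c 4` on a
spine: the path in `T` from `c 0` to `c 4` together with the subtrees of `T` incident to the
vertices of this path that contain no labeled node.  `c 0` and `c 4` are its *extreme nodes*. -/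
def IsFiveComponentOn (c : Fin 5 → V) (K : Set V) : Prop :=
  Function.Injective c ∧
  (∀ i : Fin 4, MT.SpineAdj (c i.castSucc) (c i.succ)) ∧
  ∃ p : MT.T.Walk (c 0) (c 4), p.IsPath ∧
    K = {u | u ∈ p.support} ∪ ⋃ v ∈ {u | u ∈ p.support}, MT.hangSet v

/-- `K` is a 5-component of `T`. -/
def IsFiveComponent (K : Set V) : Prop :=
  ∃ c : Fin 5 → V, MT.IsFiveComponentOn c K

end MarkedTree

/-!
Say that `m` separates `u` from `v` when every `u`–`v` walk passes through `m`. Any three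
vertices of a tree have a median separating each pair, and a median of three vertices of the
subtree spanned by the marked leaves, other than those three, is a branch node. Hence a
label-free subtree hanging at a branch node contains no branch node (the one farthest away would
be an L-node), so the marked leaves in it are exactly the leaves attached to that node: an
L-component carries the two leaves of its L-node, a 5-component the five leaves of its C-nodes.
Distinct components have disjoint cores, since a vertex shared by two branch-free spine paths
with distinct ends would be a median of three branch nodes; and a label-free subtree hanging at
one core cannot reach another core, because every core contains a labeled node.
-/

namespace SimpleGraph

variable {V : Type*} {G : SimpleGraph V}

/-- `¬ G.ReachableAvoiding m u v` says that `m` lies on every walk from `u` to `v`, which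
includes the case `m = u` or `m = v`. -/
def ReachableAvoiding (G : SimpleGraph V) (m u v : V) : Prop :=
  ∃ p : G.Walk u v, m ∉ p.support

namespace ReachableAvoiding

variable {m u v w : V}

theorem symm (h : G.ReachableAvoiding m u v) : G.ReachableAvoiding m v u :=
  let ⟨p, hp⟩ := h
  ⟨p.reverse, by rwa [Walk.support_reverse, List.mem_reverse]⟩

theorem trans (h : G.ReachableAvoiding m u v) (h' : G.ReachableAvoiding m v w) :
    G.ReachableAvoiding m u w :=
  let ⟨p, hp⟩ := h
  let ⟨q, hq⟩ := h'
  ⟨p.append q, by rw [Walk.mem_support_append_iff]; tauto⟩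

theorem ne_left (h : G.ReachableAvoiding m u v) : u ≠ m := by
  rintro rfl
  obtain ⟨p, hp⟩ := h
  exact hp p.start_mem_support

theorem ne_right (h : G.ReachableAvoiding m u v) : v ≠ m :=
  h.symm.ne_left

end ReachableAvoiding

theorem reachableAvoiding_self {m u : V} (h : u ≠ m) : G.ReachableAvoiding m u u :=
  ⟨.nil, by simpa using h.symm⟩

theorem Walk.mem_support_of_not_reachableAvoiding {m u v : V}
    (h : ¬ G.ReachableAvoiding m u v) (p : G.Walk u v) : m ∈ p.support :=
  not_not.mp fun hm => h ⟨p, hm⟩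

theorem Walk.IsPath.reachableAvoiding_start {u v x : V} {p : G.Walk u v} (hp : p.IsPath)
    (hx : x ∈ p.support) (hxu : x ≠ u) : G.ReachableAvoiding u x v := by
  obtain ⟨q, r, -, -, rfl⟩ := hp.mem_support_iff_exists_append.mp hx
  exact ⟨r, fun hu => hp.ne_of_mem_support_of_append hxu.symm q.start_mem_support hu rfl⟩

theorem Walk.IsPath.reachableAvoiding_end {u v x : V} {p : G.Walk u v} (hp : p.IsPath)
    (hx : x ∈ p.support) (hxv : x ≠ v) : G.ReachableAvoiding v u x :=
  (hp.reverse.reachableAvoiding_start (by simpa using hx) hxv).symm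

theorem Walk.IsPath.append_of_not_reachableAvoiding {u v w x : V} {p : G.Walk u v}
    {q : G.Walk v w} (hp : p.IsPath) (hq : q.IsPath) (hx : x ∈ p.support) (hxv : x ≠ v)
    (h : ¬ G.ReachableAvoiding v x w) : (p.append q).IsPath := by
  have hqn := hq.support_nodup
  rw [← q.cons_tail_support, List.nodup_cons] at hqn
  rw [Walk.isPath_def, Walk.support_append, List.nodup_append]
  refine ⟨hp.support_nodup, hqn.2, fun y hyp z hzq hyz => ?_⟩
  subst hyz
  have hyv : y ≠ v := fun hyv => hqn.1 (hyv ▸ hzq)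
  exact h (((hp.reachableAvoiding_end hx hxv).symm.trans (hp.reachableAvoiding_end hyp hyv)).trans
    (hq.reachableAvoiding_start (List.mem_of_mem_tail hzq) hyv))

theorem Reachable.exists_adj_reachableAvoiding {m a : V} (h : G.Reachable m a) (ha : a ≠ m) :
    ∃ w, G.Adj m w ∧ G.ReachableAvoiding m w a := by
  obtain ⟨p, hp⟩ := h.exists_isPath
  cases p with
  | nil => exact absurd rfl ha
  | cons hadj q => exact ⟨_, hadj, q, ((Walk.cons_isPath_iff hadj q).mp hp).2⟩

theorem Reachable.reachableAvoiding_of_not {m u ℓ : V} (h : G.Reachable m ℓ) (hu : u ≠ m)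
    (h' : ¬ G.ReachableAvoiding u ℓ m) : G.ReachableAvoiding m u ℓ := by
  obtain ⟨p, hp⟩ := h.exists_isPath
  exact hp.reachableAvoiding_start (Walk.mem_support_of_not_reachableAvoiding
    (fun h'' => h' h''.symm) p) hu

theorem Preconnected.reachableAvoiding_of_subsingleton {ℓ u v : V} (hG : G.Preconnected)
    (hℓ : (G.neighborSet ℓ).Subsingleton) (hu : u ≠ ℓ) (hv : v ≠ ℓ) :
    G.ReachableAvoiding ℓ u v := by
  obtain ⟨wu, hwu, hu⟩ := (hG ℓ u).exists_adj_reachableAvoiding hu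
  obtain ⟨wv, hwv, hv⟩ := (hG ℓ v).exists_adj_reachableAvoiding hv
  obtain rfl : wu = wv := hℓ hwu hwv
  exact hu.symm.trans hv

theorem Preconnected.ncard_le_of_pairwise_not_reachableAvoiding (hG : G.Preconnected)
    {m : V} {S D : Set V} (hD : D.Finite) (hmS : m ∉ S)
    (hS : S.Pairwise fun a b => ¬ G.ReachableAvoiding m a b)
    (hdir : ∀ s ∈ S, ∀ w, G.Adj m w → G.ReachableAvoiding m w s → w ∈ D) :
    S.ncard ≤ D.ncard := by
  have hex : ∀ s ∈ S, ∃ w, G.Adj m w ∧ G.ReachableAvoiding m w s := fun s hs =>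
    (hG m s).exists_adj_reachableAvoiding (fun h => hmS (h ▸ hs))
  choose! f hf using hex
  refine Set.ncard_le_ncard_of_injOn f (fun s hs => hdir s hs _ (hf s hs).1 (hf s hs).2)
    (fun s hs t ht hst => ?_) hD
  by_contra hne
  exact hS hs ht hne ((hf s hs).2.symm.trans (hst ▸ (hf t ht).2))

theorem Reachable.dist_lt_of_not_reachableAvoiding {v z b : V} (h : G.Reachable v z)
    (hb : ¬ G.ReachableAvoiding b v z) (hzb : z ≠ b) : G.dist v b < G.dist v z := by
  obtain ⟨W, hW, hlen⟩ := h.exists_path_of_dist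
  obtain ⟨q, r, -, -, rfl⟩ :=
    hW.mem_support_iff_exists_append.mp (Walk.mem_support_of_not_reachableAvoiding hb _)
  have hr : r.length ≠ 0 := fun h0 => hzb (Walk.eq_of_length_eq_zero h0).symm
  have := dist_le q
  rw [Walk.length_append] at hlen
  omega

namespace IsAcyclic

theorem not_reachableAvoiding_iff (hG : G.IsAcyclic) {m u v : V} {p : G.Walk u v}
    (hp : p.IsPath) :
    ¬ G.ReachableAvoiding m u v ↔ m ∈ p.support := by
  classical
  refine ⟨fun h => Walk.mem_support_of_not_reachableAvoiding h p, fun hm ⟨q, hq⟩ => hq ?_⟩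
  have : p = q.toPath.1 := congrArg Subtype.val ((hG.subsingleton_path u v).elim ⟨p, hp⟩ q.toPath)
  exact q.support_toPath_subset_support (this ▸ hm)

theorem not_reachableAvoiding_of_adj (hG : G.IsAcyclic) {x y b : V} (hxy : G.Adj x y)
    (hx : G.ReachableAvoiding x y b) : ¬ G.ReachableAvoiding y x b := by
  classical
  rintro ⟨q, hq⟩
  obtain ⟨p, hp⟩ := hx
  have hpath : (Walk.cons hxy p.toPath.1).IsPath :=
    (Walk.cons_isPath_iff _ _).mpr ⟨p.toPath.2, fun h => hp (p.support_toPath_subset_support h)⟩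
  have hy : y ∈ q.toPath.1.support := by
    rw [← congrArg Subtype.val ((hG.subsingleton_path x b).elim ⟨_, hpath⟩ q.toPath)]
    simp
  exact hq (q.support_toPath_subset_support hy)

theorem eq_of_adj_of_reachableAvoiding (hG : G.IsAcyclic) {m w w' : V} (hw : G.Adj m w)
    (hw' : G.Adj m w') (h : G.ReachableAvoiding m w w') : w = w' := by
  by_contra hne
  refine hG.not_reachableAvoiding_of_adj hw h ⟨Walk.cons hw' .nil, ?_⟩
  simp [hw.ne.symm, hne]

theorem exists_median (hG : G.IsAcyclic) {x a : V} (h : G.Reachable x a) (z : V) :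
    ∃ m, ¬ G.ReachableAvoiding m x a ∧ ¬ G.ReachableAvoiding m x z ∧
      ¬ G.ReachableAvoiding m a z := by
  obtain ⟨p, hp⟩ := h.exists_isPath
  clear h
  induction p with
  | nil => exact ⟨_, fun h => h.ne_left rfl, fun h => h.ne_left rfl, fun h => h.ne_left rfl⟩
  | @cons x y a hxy p ih =>
    rw [Walk.cons_isPath_iff] at hp
    obtain ⟨m, hya, hyz, haz⟩ := ih hp.1
    have hxa : G.ReachableAvoiding x y a := ⟨p, hp.2⟩
    by_cases hxz : G.ReachableAvoiding x y z
    · -- the median of `y`, `a`, `z` still works, since `x` lies behind `y`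
      have step : ∀ t, G.ReachableAvoiding x y t → ¬ G.ReachableAvoiding m y t →
          ¬ G.ReachableAvoiding m x t := by
        rintro t hxt hmt ⟨W, hW⟩
        rcases eq_or_ne m y with rfl | hmy
        · exact hG.not_reachableAvoiding_of_adj hxy hxt ⟨W, hW⟩
        · exact hmt ⟨Walk.cons hxy.symm W, by simp [hmy, hW]⟩
      exact ⟨m, step a hxa hya, step z hxz hyz, haz⟩
    · exact ⟨x, fun h => h.ne_left rfl, fun h => h.ne_left rfl, fun h => hxz (hxa.trans h)⟩

end IsAcyclic

end SimpleGraph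

namespace MarkedTree

variable {V : Type*} [Fintype V] {MT : MarkedTree V}

theorem ncard_branchDirs_le_three (v : V) : (MT.branchDirs v).ncard ≤ 3 := by
  refine (Set.ncard_le_ncard (t := MT.T.neighborSet v) fun _ hw => hw.1).trans ?_
  rw [← Nat.card_coe_set_eq]
  rcases MT.proper v with h | h <;> omega

theorem IsMarkedLeaf.neighborSet_subsingleton {ℓ : V} (h : MT.IsMarkedLeaf ℓ) :
    (MT.T.neighborSet ℓ).Subsingleton := by
  obtain ⟨i, -, rfl⟩ := h
  have hi := (MT.ord i).2
  rw [Nat.card_coe_set_eq, Set.ncard_eq_one] at hi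
  obtain ⟨a, ha⟩ := hi
  exact ha ▸ Set.subsingleton_singleton

theorem IsMarkedLeaf.reachableAvoiding {ℓ u v : V} (h : MT.IsMarkedLeaf ℓ) (hu : u ≠ ℓ)
    (hv : v ≠ ℓ) : MT.T.ReachableAvoiding ℓ u v :=
  MT.isTree.connected.preconnected.reachableAvoiding_of_subsingleton
    h.neighborSet_subsingleton hu hv

theorem IsMarkedLeaf.eq_or_eq_of_mem_support {ℓ u w : V} (h : MT.IsMarkedLeaf ℓ)
    {p : MT.T.Walk u w} (hp : p.IsPath) (hℓ : ℓ ∈ p.support) : ℓ = u ∨ ℓ = w := by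
  by_contra! hne
  exact (MT.isTree.isAcyclic.not_reachableAvoiding_iff hp).mpr hℓ
    (h.reachableAvoiding hne.1.symm hne.2.symm)

theorem IsMarkedLeaf.not_isBranchNode {ℓ : V} (h : MT.IsMarkedLeaf ℓ) : ¬ MT.IsBranchNode ℓ := by
  intro hb
  rw [IsBranchNode, Nat.card_coe_set_eq] at hb
  obtain ⟨a, b, ha, hb, hab⟩ :=
    (Set.one_lt_ncard_iff (s := MT.branchDirs ℓ) (Set.toFinite _)).mp (by omega)
  exact hab (h.neighborSet_subsingleton ha.1 hb.1)

theorem IsLabeled.isBranchNode {v : V} (h : MT.IsLabeled v) : MT.IsBranchNode v := by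
  rcases h with h | h | h <;> exact h.1

theorem ncard_le_ncard_branchDirs {m : V} {S : Set V} (hmS : m ∉ S)
    (hS : S.Pairwise fun a b => ¬ MT.T.ReachableAvoiding m a b)
    (hleaf : ∀ s ∈ S, ∃ ℓ, MT.IsMarkedLeaf ℓ ∧ MT.T.ReachableAvoiding m s ℓ) :
    S.ncard ≤ (MT.branchDirs m).ncard :=
  MT.isTree.connected.preconnected.ncard_le_of_pairwise_not_reachableAvoiding
    (Set.toFinite _) hmS hS fun s hs _ hw hws =>
      let ⟨ℓ, hℓ, hsℓ⟩ := hleaf s hs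
      ⟨hw, ℓ, hℓ, hws.trans hsℓ⟩

variable (MT) in
/-- `u` is a marked leaf or separates two marked leaves: it lies on the subtree of `T` spanned
by the marked leaves. -/
def InMarkedHull (u : V) : Prop :=
  ∀ m, m ≠ u → ∃ ℓ, MT.IsMarkedLeaf ℓ ∧ ¬ MT.T.ReachableAvoiding u ℓ m

theorem IsMarkedLeaf.inMarkedHull {ℓ : V} (h : MT.IsMarkedLeaf ℓ) : MT.InMarkedHull ℓ :=
  fun _ _ => ⟨ℓ, h, fun h' => h'.ne_left rfl⟩

theorem InMarkedHull.exists_reachableAvoiding {u m : V} (hu : MT.InMarkedHull u) (hum : u ≠ m) :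
    ∃ ℓ, MT.IsMarkedLeaf ℓ ∧ MT.T.ReachableAvoiding m u ℓ :=
  let ⟨ℓ, hℓ, h⟩ := hu m hum.symm
  ⟨ℓ, hℓ, (MT.isTree.connected.preconnected m ℓ).reachableAvoiding_of_not hum h⟩

theorem InMarkedHull.of_not_reachableAvoiding {u w x : V} (hu : MT.InMarkedHull u)
    (hw : MT.InMarkedHull w) (hxu : x ≠ u) (hxw : x ≠ w)
    (h : ¬ MT.T.ReachableAvoiding x u w) : MT.InMarkedHull x := by
  intro m hm
  obtain ⟨ℓu, hℓu, hu⟩ := hu.exists_reachableAvoiding hxu.symm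
  obtain ⟨ℓw, hℓw, hw⟩ := hw.exists_reachableAvoiding hxw.symm
  by_contra! hsame
  exact h (hu.trans ((hsame ℓu hℓu).trans (hsame ℓw hℓw).symm) |>.trans hw.symm)

theorem IsBranchNode.exists_two_leaves_away {b x : V} (hb : MT.IsBranchNode b) (hx : x ≠ b) :
    ∃ ℓ₁ ℓ₂, MT.IsMarkedLeaf ℓ₁ ∧ MT.IsMarkedLeaf ℓ₂ ∧ ¬ MT.T.ReachableAvoiding b ℓ₁ ℓ₂ ∧
      ¬ MT.T.ReachableAvoiding b ℓ₁ x ∧ ¬ MT.T.ReachableAvoiding b ℓ₂ x := by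
  obtain ⟨d, hd, hdx⟩ := (MT.isTree.connected.preconnected b x).exists_adj_reachableAvoiding hx
  rw [IsBranchNode, Nat.card_coe_set_eq] at hb
  have h2 : 1 < (MT.branchDirs b \ {d}).ncard :=
    lt_of_lt_of_le (by omega) (Set.pred_ncard_le_ncard_sdiff_singleton _ d)
  obtain ⟨w₁, w₂, ⟨⟨hw₁, ℓ₁, hℓ₁, h₁⟩, hw₁d⟩, ⟨⟨hw₂, ℓ₂, hℓ₂, h₂⟩, hw₂d⟩, hne⟩ :=
    (Set.one_lt_ncard_iff (Set.toFinite _)).mp h2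
  have hdir : ∀ {w w'}, MT.T.Adj b w → MT.T.Adj b w' → MT.T.ReachableAvoiding b w w' → w = w' :=
    MT.isTree.isAcyclic.eq_of_adj_of_reachableAvoiding
  replace h₁ : MT.T.ReachableAvoiding b w₁ ℓ₁ := h₁
  replace h₂ : MT.T.ReachableAvoiding b w₂ ℓ₂ := h₂
  exact ⟨ℓ₁, ℓ₂, hℓ₁, hℓ₂, fun h => hne (hdir hw₁ hw₂ (h₁.trans (h.trans h₂.symm))),
    fun h => hw₁d (hdir hw₁ hd (h₁.trans (h.trans hdx.symm))),
    fun h => hw₂d (hdir hw₂ hd (h₂.trans (h.trans hdx.symm)))⟩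

theorem IsBranchNode.inMarkedHull {b : V} (hb : MT.IsBranchNode b) : MT.InMarkedHull b :=
  fun _ hm =>
    let ⟨ℓ, _, hℓ, _, _, h, _⟩ := hb.exists_two_leaves_away hm
    ⟨ℓ, hℓ, h⟩

theorem isBranchNode_of_separates {m a b c : V} (ha : MT.InMarkedHull a)
    (hb : MT.InMarkedHull b) (hc : MT.InMarkedHull c) (hma : m ≠ a) (hmb : m ≠ b) (hmc : m ≠ c)
    (hab : ¬ MT.T.ReachableAvoiding m a b) (hac : ¬ MT.T.ReachableAvoiding m a c)
    (hbc : ¬ MT.T.ReachableAvoiding m b c) : MT.IsBranchNode m := by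
  have hne : ∀ {x y}, x ≠ m → ¬ MT.T.ReachableAvoiding m x y → x ≠ y :=
    fun hx h hxy => h (hxy ▸ reachableAvoiding_self hx)
  rw [IsBranchNode, Nat.card_coe_set_eq, ← Set.ncard_eq_three.mpr
    ⟨a, b, c, hne hma.symm hab, hne hma.symm hac, hne hmb.symm hbc, rfl⟩]
  refine ncard_le_ncard_branchDirs (by simp [hma, hmb, hmc]) ?_ ?_
  · simp only [Set.pairwise_insert, Set.pairwise_singleton, Set.mem_insert_iff,
      Set.mem_singleton_iff]
    grind [ReachableAvoiding.symm]
  · simp only [Set.mem_insert_iff, Set.mem_singleton_iff]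
    rintro s (rfl | rfl | rfl)
    exacts [ha.exists_reachableAvoiding hma.symm, hb.exists_reachableAvoiding hmb.symm,
      hc.exists_reachableAvoiding hmc.symm]

variable (MT) in
def IsBranchFree {u w : V} (p : MT.T.Walk u w) : Prop :=
  ∀ z ∈ p.support, z ≠ u → z ≠ w → ¬ MT.IsBranchNode z

theorem IsBranchFree.eq_or_eq {u w x : V} {p : MT.T.Walk u w} (h : MT.IsBranchFree p)
    (hx : x ∈ p.support) (hxb : MT.IsBranchNode x) : x = u ∨ x = w := by
  by_contra! hne
  exact h x hx hne.1 hne.2 hxb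

theorem IsBranchFree.of_append_left {u x w : V} {p : MT.T.Walk u x} {q : MT.T.Walk x w}
    (hpq : (p.append q).IsPath) (h : MT.IsBranchFree (p.append q)) : MT.IsBranchFree p := by
  refine fun z hz hzu hzx => h z (Walk.mem_support_append_iff _ _ |>.mpr (.inl hz)) hzu ?_
  rintro rfl
  exact hpq.ne_of_mem_support_of_append hzx hz q.end_mem_support rfl

theorem IsBranchFree.of_append_right {u x w : V} {p : MT.T.Walk u x} {q : MT.T.Walk x w}
    (hpq : (p.append q).IsPath) (h : MT.IsBranchFree (p.append q)) : MT.IsBranchFree q := by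
  refine fun z hz hzx hzw => h z (Walk.mem_support_append_iff _ _ |>.mpr (.inr hz)) ?_ hzw
  rintro rfl
  exact hpq.ne_of_mem_support_of_append hzx p.start_mem_support hz rfl

theorem IsBranchFree.reverse {u w : V} {p : MT.T.Walk u w} (h : MT.IsBranchFree p) :
    MT.IsBranchFree p.reverse :=
  fun z hz hzw hzu => h z (by simpa using hz) hzu hzw

theorem IsBranchFree.mem_support_or_separates {x a z : V} {p : MT.T.Walk x a} (hp : p.IsPath)
    (hpb : MT.IsBranchFree p) (hx : MT.InMarkedHull x) (ha : MT.InMarkedHull a)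
    (hz : MT.InMarkedHull z) (h : MT.T.ReachableAvoiding x a z) :
    z ∈ p.support ∨ ¬ MT.T.ReachableAvoiding a x z := by
  -- the median of `x`, `a`, `z` is either `a`, `z`, or a branch node inside `p`
  obtain ⟨m, hxa, hxz, haz⟩ :=
    MT.isTree.isAcyclic.exists_median (MT.isTree.connected.preconnected x a) z
  rcases eq_or_ne m a with rfl | hma
  · exact .inr hxz
  rcases eq_or_ne m z with rfl | hmz
  · exact .inl (Walk.mem_support_of_not_reachableAvoiding hxa p)
  rcases eq_or_ne m x with rfl | hmx
  · exact absurd h haz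
  exact absurd (isBranchNode_of_separates hx ha hz hmx hma hmz hxa hxz haz)
    (hpb m (Walk.mem_support_of_not_reachableAvoiding hxa p) hmx hma)

theorem IsBranchFree.not_reachableAvoiding {u v w : V} {p : MT.T.Walk v u}
    {q : MT.T.Walk v w} (hp : p.IsPath) (hpb : MT.IsBranchFree p) (hqb : MT.IsBranchFree q)
    (hu : MT.IsBranchNode u) (hv : MT.InMarkedHull v) (hw : MT.IsBranchNode w) (huw : u ≠ w) :
    ¬ MT.T.ReachableAvoiding v u w := by
  intro h
  rcases hpb.mem_support_or_separates hp hv hu.inMarkedHull hw.inMarkedHull h with hwp | huq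
  · exact hpb w hwp h.ne_right huw.symm hw
  · exact hqb u (Walk.mem_support_of_not_reachableAvoiding huq q) h.ne_left huw hu

theorem IsBranchFree.disjoint_support {u w u' w' : V} {p : MT.T.Walk u w}
    {p' : MT.T.Walk u' w'} (hp : p.IsPath) (hpb : MT.IsBranchFree p) (hp' : p'.IsPath)
    (hp'b : MT.IsBranchFree p') (hu : MT.IsBranchNode u) (hw : MT.IsBranchNode w)
    (hu' : MT.IsBranchNode u') (huu' : u ≠ u') (huw' : u ≠ w') (hwu' : w ≠ u') (hww' : w ≠ w') :
    p.support.Disjoint p'.support := by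
  intro x hx hx'
  have hxb : ¬ MT.IsBranchNode x := by
    intro hxb
    rcases hpb.eq_or_eq hx hxb with rfl | rfl <;>
      rcases hp'b.eq_or_eq hx' hxb with rfl | rfl <;> contradiction
  have hne : ∀ {y}, MT.IsBranchNode y → x ≠ y := fun hy h => hxb (h ▸ hy)
  obtain ⟨q, r, hq, hr, rfl⟩ := hp.mem_support_iff_exists_append.mp hx
  obtain ⟨q', r', -, -, rfl⟩ := hp'.mem_support_iff_exists_append.mp hx'
  have hxuw := (MT.isTree.isAcyclic.not_reachableAvoiding_iff hp).mpr hx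
  have hxh := hu.inMarkedHull.of_not_reachableAvoiding hw.inMarkedHull (hne hu) (hne hw) hxuw
  have hqb := (hpb.of_append_left hp).reverse
  have hrb := hpb.of_append_right hp
  have hq'b := (hp'b.of_append_left hp').reverse
  exact hxb (isBranchNode_of_separates hu.inMarkedHull hw.inMarkedHull hu'.inMarkedHull
    (hne hu) (hne hw) (hne hu') hxuw
    (hqb.not_reachableAvoiding hq.reverse hq'b hu hxh hu' huu')
    (hrb.not_reachableAvoiding hr hq'b hw hxh hu' hwu'))

theorem mem_attached_iff {v ℓ : V} (hv : MT.IsBranchNode v) :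
    ℓ ∈ MT.attached v ↔
      MT.IsMarkedLeaf ℓ ∧ ∀ z, MT.T.ReachableAvoiding v ℓ z → ¬ MT.IsBranchNode z := by
  constructor
  · rintro ⟨hℓ, p, hp, hpb⟩
    refine ⟨hℓ, fun z hz hzb => ?_⟩
    rcases IsBranchFree.mem_support_or_separates hp hpb hv.inMarkedHull hℓ.inMarkedHull
      hzb.inMarkedHull hz with hzp | hℓz
    · exact hpb z hzp hz.ne_right (fun h => hℓ.not_isBranchNode (h ▸ hzb)) hzb
    · exact hℓz (hℓ.reachableAvoiding (fun h => hℓ.not_isBranchNode (h ▸ hv))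
        (fun h => hℓ.not_isBranchNode (h ▸ hzb)))
  · rintro ⟨hℓ, hfree⟩
    obtain ⟨p, hp⟩ := (MT.isTree.connected.preconnected v ℓ).exists_isPath
    exact ⟨hℓ, p, hp, fun z hz hzv _ => hfree z (hp.reachableAvoiding_start hz hzv).symm⟩

theorem eq_of_mem_attached_of_reachableAvoiding {v ℓ ℓ' : V} (hv : MT.IsBranchNode v)
    (hℓ : ℓ ∈ MT.attached v) (hℓ' : MT.IsMarkedLeaf ℓ') (h : MT.T.ReachableAvoiding v ℓ ℓ') :
    ℓ = ℓ' := by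
  obtain ⟨hℓm, p, hp, hpb⟩ := hℓ
  have hℓv : ℓ ≠ v := h.ne_left
  by_contra hne
  rcases IsBranchFree.mem_support_or_separates hp hpb hv.inMarkedHull hℓm.inMarkedHull
    hℓ'.inMarkedHull h with hp' | hsep
  · rcases hℓ'.eq_or_eq_of_mem_support hp hp' with h' | h'
    exacts [h.ne_right h', hne h'.symm]
  · exact hsep (hℓm.reachableAvoiding hℓv.symm (Ne.symm hne))

theorem disjoint_attached {v v' : V} (hv : MT.IsBranchNode v) (hv' : MT.IsBranchNode v')
    (hne : v ≠ v') : Disjoint (MT.attached v) (MT.attached v') := by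
  refine Set.disjoint_left.mpr fun ℓ hℓ hℓ' => ?_
  obtain ⟨hℓm, p, -, hpb⟩ := hℓ'
  have hvp : v ∉ p.support := fun h =>
    hpb v h hne (fun h' => hℓm.not_isBranchNode (h' ▸ hv)) hv
  exact ((mem_attached_iff hv).mp hℓ).2 v' ⟨p.reverse, by simpa using hvp⟩ hv'

theorem ncard_attached_le_two {v z : V} (hv : MT.IsBranchNode v) (hz : MT.IsBranchNode z)
    (hzv : z ≠ v) : (MT.attached v).ncard ≤ 2 := by
  have hfree := fun {ℓ} (hℓ : ℓ ∈ MT.attached v) => (mem_attached_iff hv).mp hℓ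
  have hzA : z ∉ MT.attached v := fun h => (hfree h).1.not_isBranchNode hz
  have hvA : v ∉ MT.attached v := fun h => (hfree h).1.not_isBranchNode hv
  have hsep : ∀ ℓ ∈ MT.attached v, ¬ MT.T.ReachableAvoiding v ℓ z := fun ℓ hℓ h =>
    (hfree hℓ).2 z h hz
  -- the attached leaves and `z` lie on pairwise different sides of `v`
  have hcard := ncard_le_ncard_branchDirs (S := insert z (MT.attached v))
    (by simp [hzv.symm, hvA])
    (Set.pairwise_insert.mpr ⟨fun ℓ hℓ ℓ' hℓ' hne h =>
      hne (eq_of_mem_attached_of_reachableAvoiding hv hℓ (hfree hℓ').1 h),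
      fun ℓ hℓ _ => ⟨fun h => hsep ℓ hℓ h.symm, hsep ℓ hℓ⟩⟩)
    (by
      rintro s (rfl | hs)
      · exact hz.inMarkedHull.exists_reachableAvoiding hzv
      · exact ⟨s, (hfree hs).1, reachableAvoiding_self fun h => hvA (h ▸ hs)⟩)
  rw [Set.ncard_insert_of_notMem hzA] at hcard
  have := ncard_branchDirs_le_three (MT := MT) v
  omega

theorem not_isBranchNode_of_forall_not_isLabeled {v u z : V} (hv : MT.IsBranchNode v)
    (hfree : ∀ y, MT.T.ReachableAvoiding v u y → ¬ MT.IsLabeled y)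
    (hz : MT.T.ReachableAvoiding v u z) : ¬ MT.IsBranchNode z := by
  -- the branch node `b` of this side farthest from `v` would be an L-node
  intro hzb
  obtain ⟨b, ⟨hub, hb⟩, hmax⟩ := Set.exists_max_image
    {y | MT.T.ReachableAvoiding v u y ∧ MT.IsBranchNode y} (MT.T.dist v) (Set.toFinite _)
    ⟨z, hz, hzb⟩
  have hbv : b ≠ v := hub.ne_right
  have hbeyond : ∀ y, ¬ MT.T.ReachableAvoiding b v y → y ≠ b → ¬ MT.IsBranchNode y := by
    intro y hy hyb hyb'
    have hlt := (MT.isTree.connected.preconnected v y).dist_lt_of_not_reachableAvoiding hy hyb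
    obtain ⟨W, hW⟩ := (MT.isTree.connected.preconnected v y).exists_isPath
    have hbW := Walk.mem_support_of_not_reachableAvoiding hy W
    exact (hmax y ⟨hub.trans (hW.reachableAvoiding_start hbW hbv), hyb'⟩).not_gt hlt
  obtain ⟨ℓ₁, ℓ₂, hℓ₁, hℓ₂, h₁₂, h₁, h₂⟩ := hb.exists_two_leaves_away hbv.symm
  have hatt : ∀ {ℓ}, MT.IsMarkedLeaf ℓ → ¬ MT.T.ReachableAvoiding b ℓ v → ℓ ∈ MT.attached b :=
    fun hℓ hℓv => (mem_attached_iff hb).mpr ⟨hℓ, fun y hy => hbeyond y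
      (fun h => hℓv (hy.trans h.symm)) hy.ne_right⟩
  have hne : ℓ₁ ≠ ℓ₂ := fun h => h₁₂ (h ▸ reachableAvoiding_self (hℓ₁.not_isBranchNode <| · ▸ hb))
  have hL : MT.IsLNode b := by
    refine ⟨hb, ?_⟩
    rw [Nat.card_coe_set_eq]
    refine le_antisymm (ncard_attached_le_two hb hv hbv.symm) ?_
    rw [← Set.ncard_pair hne]
    exact Set.ncard_le_ncard (by rintro x (rfl | rfl); exacts [hatt hℓ₁ h₁, hatt hℓ₂ h₂])
  exact hfree b hub (.inl hL)

theorem mem_hangSet_iff {v u : V} :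
    u ∈ MT.hangSet v ↔ u ≠ v ∧ ∀ z, MT.T.ReachableAvoiding v u z → ¬ MT.IsLabeled z := by
  simp only [hangSet, Set.mem_iUnion, exists_prop]
  constructor
  · rintro ⟨w, ⟨-, hfree⟩, hwu : MT.T.ReachableAvoiding v w u⟩
    exact ⟨hwu.ne_right, fun z hz => hfree z (ReachableAvoiding.trans hwu hz)⟩
  · rintro ⟨huv, hfree⟩
    obtain ⟨w, hw, hwu⟩ := (MT.isTree.connected.preconnected v u).exists_adj_reachableAvoiding huv
    exact ⟨w, ⟨hw, fun z hz => hfree z (hwu.symm.trans hz)⟩, hwu⟩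

theorem mem_hangSet_of_reachableAvoiding {v x y : V} (hx : x ∈ MT.hangSet v)
    (h : MT.T.ReachableAvoiding v x y) : y ∈ MT.hangSet v :=
  let ⟨_, hfree⟩ := mem_hangSet_iff.mp hx
  mem_hangSet_iff.mpr ⟨h.ne_right, fun z hz => hfree z (h.trans hz)⟩

theorem mem_hangSet_iff_mem_attached {v ℓ : V} (hv : MT.IsBranchNode v)
    (hℓ : MT.IsMarkedLeaf ℓ) : ℓ ∈ MT.hangSet v ↔ ℓ ∈ MT.attached v := by
  rw [mem_hangSet_iff, mem_attached_iff hv]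
  constructor
  · exact fun ⟨_, hfree⟩ => ⟨hℓ, fun z => not_isBranchNode_of_forall_not_isLabeled hv hfree⟩
  · exact fun ⟨_, hfree⟩ => ⟨fun h => hℓ.not_isBranchNode (h ▸ hv),
      fun z hz hzl => hfree z hz hzl.isBranchNode⟩

variable (MT) in
def pathWithHangs {a b : V} (p : MT.T.Walk a b) : Set V :=
  {u | u ∈ p.support} ∪ ⋃ v ∈ {u | u ∈ p.support}, MT.hangSet v

theorem lComponent_eq_pathWithHangs (v : V) :
    MT.LComponent v = MT.pathWithHangs (Walk.nil : MT.T.Walk v v) := by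
  ext x
  simp [LComponent, pathWithHangs]

theorem not_mem_hangSet_of_mem_support {a b v x : V} {p : MT.T.Walk a b} (ha : MT.IsLabeled a)
    (hx : x ∈ p.support) (hv : v ∉ p.support) : x ∉ MT.hangSet v := by
  obtain ⟨q, r, rfl⟩ := p.mem_support_iff_exists_append.mp hx
  rw [Walk.mem_support_append_iff, not_or] at hv
  exact fun h => (mem_hangSet_iff.mp h).2 a ⟨q.reverse, by simpa using hv.1⟩ ha

theorem disjoint_pathWithHangs {a b a' b' : V} {p : MT.T.Walk a b} {p' : MT.T.Walk a' b'}
    (ha : MT.IsLabeled a) (ha' : MT.IsLabeled a') (h : p.support.Disjoint p'.support) :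
    Disjoint (MT.pathWithHangs p) (MT.pathWithHangs p') := by
  rw [Set.disjoint_left]
  rintro x (hx | hx) (hx' | hx')
  · exact h hx hx'
  · obtain ⟨v', hv', hx'⟩ := Set.mem_iUnion₂.mp hx'
    exact not_mem_hangSet_of_mem_support ha hx (fun hv => h hv hv') hx'
  · obtain ⟨v, hv, hx⟩ := Set.mem_iUnion₂.mp hx
    exact not_mem_hangSet_of_mem_support ha' hx' (fun hv' => h hv hv') hx
  obtain ⟨v, hv, hx⟩ := Set.mem_iUnion₂.mp hx
  obtain ⟨v', hv', hx'⟩ := Set.mem_iUnion₂.mp hx'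
  by_cases hvv' : MT.T.ReachableAvoiding v x v'
  · exact not_mem_hangSet_of_mem_support ha' hv' (fun hv'' => h hv hv'')
      (mem_hangSet_of_reachableAvoiding hx hvv')
  · have hne : v ≠ v' := fun he => h hv (he ▸ hv')
    exact not_mem_hangSet_of_mem_support ha hv (fun hv'' => h hv'' hv')
      (mem_hangSet_of_reachableAvoiding hx'
        ((MT.isTree.connected.preconnected v' x).reachableAvoiding_of_not hne hvv').symm)

theorem mem_pathWithHangs_iff {a b ℓ : V} {p : MT.T.Walk a b} (hp : p.IsPath)
    (ha : MT.IsLabeled a) (hb : MT.IsLabeled b) (hℓ : MT.IsMarkedLeaf ℓ) :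
    ℓ ∈ MT.pathWithHangs p ↔ ∃ v ∈ p.support, MT.IsBranchNode v ∧ ℓ ∈ MT.attached v := by
  simp only [pathWithHangs, Set.mem_union, Set.mem_iUnion, exists_prop]
  constructor
  · rintro (hℓp | ⟨v, hv, hℓv⟩)
    · rcases hℓ.eq_or_eq_of_mem_support hp hℓp with rfl | rfl
      exacts [absurd ha.isBranchNode hℓ.not_isBranchNode,
        absurd hb.isBranchNode hℓ.not_isBranchNode]
    by_cases hvb : MT.IsBranchNode v
    · exact ⟨v, hv, hvb, (mem_hangSet_iff_mem_attached hvb hℓ).mp hℓv⟩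
    -- otherwise `v` would separate `a`, `b` and `ℓ`
    obtain ⟨hℓv, hfree⟩ := mem_hangSet_iff.mp hℓv
    have hne : ∀ {y}, MT.IsLabeled y → v ≠ y := fun hy h => hvb (h ▸ hy.isBranchNode)
    exact absurd (isBranchNode_of_separates ha.isBranchNode.inMarkedHull
      hb.isBranchNode.inMarkedHull hℓ.inMarkedHull (hne ha) (hne hb) hℓv.symm
      ((MT.isTree.isAcyclic.not_reachableAvoiding_iff hp).mpr hv)
      (fun h => hfree a h.symm ha) (fun h => hfree b h.symm hb)) hvb
  · rintro ⟨v, hv, hvb, hℓv⟩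
    exact .inr ⟨v, hv, (mem_hangSet_iff_mem_attached hvb hℓ).mpr hℓv⟩

variable (MT) in
theorem card_marked_eq (S : Set V) :
    Nat.card {i : Fin MT.n // i ∈ MT.marked ∧ (MT.ord i).1 ∈ S} =
      Nat.card {x | MT.IsMarkedLeaf x ∧ x ∈ S} := by
  refine Nat.card_eq_of_bijective (fun i => ⟨MT.ord i.1, ⟨i.1, i.2.1, rfl⟩, i.2.2⟩)
    ⟨fun i j hij => ?_, ?_⟩
  · exact Subtype.ext (MT.ord.injective (Subtype.ext (Subtype.mk.inj hij)))
  · rintro ⟨x, ⟨j, hj, rfl⟩, hxS⟩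
    exact ⟨⟨j, hj, hxS⟩, rfl⟩

theorem IsLNode.card_marked {lam : V} (h : MT.IsLNode lam) :
    Nat.card {i : Fin MT.n // i ∈ MT.marked ∧ (MT.ord i).1 ∈ MT.LComponent lam} = 2 := by
  have hlab : MT.IsLabeled lam := .inl h
  rw [card_marked_eq, ← h.2, lComponent_eq_pathWithHangs]
  congr 2
  ext ℓ
  constructor
  · rintro ⟨hℓ, hℓK⟩
    obtain ⟨v, hv, -, hℓv⟩ := (mem_pathWithHangs_iff Walk.IsPath.nil hlab hlab hℓ).mp hℓK
    simpa [show v = lam by simpa using hv] using hℓv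
  · intro hℓ
    exact ⟨hℓ.1, (mem_pathWithHangs_iff Walk.IsPath.nil hlab hlab hℓ.1).mpr
      ⟨lam, by simp, h.1, hℓ⟩⟩

theorem IsFiveComponentOn.isCNode {c : Fin 5 → V} {K : Set V} (h : MT.IsFiveComponentOn c K)
    (i : Fin 5) : MT.IsCNode (c i) := by
  obtain ⟨-, hsp, -⟩ := h
  fin_cases i
  exacts [(hsp 0).2.1, (hsp 0).2.2.1, (hsp 1).2.2.1, (hsp 2).2.2.1, (hsp 3).2.2.1]

theorem IsFiveComponentOn.exists_path {c : Fin 5 → V} {K : Set V}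
    (h : MT.IsFiveComponentOn c K) :
    ∃ p : MT.T.Walk (c 0) (c 4), p.IsPath ∧ K = MT.pathWithHangs p ∧ (∀ i, c i ∈ p.support) ∧
      ∀ x ∈ p.support, ∃ i : Fin 4, ∃ q : MT.T.Walk (c i.castSucc) (c i.succ),
        q.IsPath ∧ MT.IsBranchFree q ∧ x ∈ q.support := by
  have hb i := (h.isCNode i).1
  obtain ⟨hinj, hsp, p, hp, rfl⟩ := h
  choose _ _ _ P hP hPb using hsp
  replace hPb : ∀ i, MT.IsBranchFree (P i) := hPb
  have hne : ∀ {i j : Fin 5}, i ≠ j → c i ≠ c j := fun hij h => hij (hinj h)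
  -- at each inner C-node the spine turns, so the concatenation is a path
  have h01 : ((P 0).append (P 1)).IsPath :=
    (hP 0).append_of_not_reachableAvoiding (hP 1) (P 0).start_mem_support (hne (by decide))
      ((hPb 0).reverse.not_reachableAvoiding (hP 0).reverse (hPb 1) (hb 0) (hb 1).inMarkedHull
        (hb 2) (hne (by decide)))
  have h02 : (((P 0).append (P 1)).append (P 2)).IsPath :=
    h01.append_of_not_reachableAvoiding (hP 2)
      (Walk.mem_support_append_iff _ _ |>.mpr (.inr (P 1).start_mem_support)) (hne (by decide))
      ((hPb 1).reverse.not_reachableAvoiding (hP 1).reverse (hPb 2) (hb 1) (hb 2).inMarkedHull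
        (hb 3) (hne (by decide)))
  have h03 : ((((P 0).append (P 1)).append (P 2)).append (P 3)).IsPath :=
    h02.append_of_not_reachableAvoiding (hP 3)
      (Walk.mem_support_append_iff _ _ |>.mpr (.inr (P 2).start_mem_support)) (hne (by decide))
      ((hPb 2).reverse.not_reachableAvoiding (hP 2).reverse (hPb 3) (hb 2) (hb 3).inMarkedHull
        (hb 4) (hne (by decide)))
  obtain rfl := congrArg Subtype.val
    ((MT.isTree.isAcyclic.subsingleton_path _ _).elim ⟨p, hp⟩ ⟨_, h03⟩)
  refine ⟨_, hp, rfl, fun i => ?_, fun x hx => ?_⟩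
  · simp only [Walk.mem_support_append_iff]
    fin_cases i
    exacts [.inl (.inl (.inl (P 0).start_mem_support)), .inl (.inl (.inr (P 1).start_mem_support)),
      .inl (.inr (P 2).start_mem_support), .inr (P 3).start_mem_support,
      .inr (P 3).end_mem_support]
  · simp only [Walk.mem_support_append_iff] at hx
    rcases hx with ((hx | hx) | hx) | hx
    exacts [⟨0, _, hP 0, hPb 0, hx⟩, ⟨1, _, hP 1, hPb 1, hx⟩, ⟨2, _, hP 2, hPb 2, hx⟩,
      ⟨3, _, hP 3, hPb 3, hx⟩]


theorem IsFiveComponentOn.card_marked {c : Fin 5 → V} {K : Set V}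
    (h : MT.IsFiveComponentOn c K) :
    Nat.card {i : Fin MT.n // i ∈ MT.marked ∧ (MT.ord i).1 ∈ K} = 5 := by
  have hC := h.isCNode
  have hlab i : MT.IsLabeled (c i) := .inr (.inl (hC i))
  obtain ⟨p, hp, rfl, hc, hcover⟩ := h.exists_path
  have hbr : ∀ x ∈ p.support, MT.IsBranchNode x → ∃ i, x = c i := fun x hx hxb => by
    obtain ⟨i, q, -, hqb, hxq⟩ := hcover x hx
    rcases hqb.eq_or_eq hxq hxb with rfl | rfl
    exacts [⟨_, rfl⟩, ⟨_, rfl⟩]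
  choose ℓ hℓ using fun i => Set.ncard_eq_one.mp ((Nat.card_coe_set_eq _).symm.trans (hC i).2)
  have hℓmem i : ℓ i ∈ MT.attached (c i) := by rw [hℓ i]; rfl
  have hinj : Function.Injective ℓ := fun i j hij => by
    by_contra hne
    exact Set.disjoint_left.mp (disjoint_attached (hC i).1 (hC j).1 (h.1.ne hne)) (hℓmem i)
      (hij ▸ hℓmem j)
  have hset : {x | MT.IsMarkedLeaf x ∧ x ∈ MT.pathWithHangs p} = Set.range ℓ := by
    ext x
    constructor
    · rintro ⟨hx, hxK⟩
      obtain ⟨v, hv, hvb, hxv⟩ := (mem_pathWithHangs_iff hp (hlab 0) (hlab 4) hx).mp hxK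
      obtain ⟨i, rfl⟩ := hbr v hv hvb
      exact ⟨i, by rw [hℓ i] at hxv; exact hxv.symm⟩
    · rintro ⟨i, rfl⟩
      exact ⟨(hℓmem i).1, (mem_pathWithHangs_iff hp (hlab 0) (hlab 4) (hℓmem i).1).mpr
        ⟨c i, hc i, (hC i).1, hℓmem i⟩⟩
  rw [card_marked_eq, hset, Nat.card_range_of_injective hinj, Nat.card_eq_fintype_card,
    Fintype.card_fin]

theorem IsLNode.disjoint_lComponent {lam lam' : V} (h : MT.IsLNode lam) (h' : MT.IsLNode lam')
    (hne : lam ≠ lam') : Disjoint (MT.LComponent lam) (MT.LComponent lam') := by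
  rw [lComponent_eq_pathWithHangs, lComponent_eq_pathWithHangs]
  exact disjoint_pathWithHangs (.inl h) (.inl h') (by simpa using hne.symm)

theorem IsLNode.disjoint_of_isFiveComponentOn {lam : V} {c : Fin 5 → V} {K : Set V}
    (h : MT.IsLNode lam) (h5 : MT.IsFiveComponentOn c K) : Disjoint (MT.LComponent lam) K := by
  have hC := h5.isCNode
  obtain ⟨p, -, rfl, -, hcover⟩ := h5.exists_path
  rw [lComponent_eq_pathWithHangs]
  refine disjoint_pathWithHangs (.inl h) (.inr (.inl (hC 0))) ?_
  simp only [Walk.support_nil, List.singleton_disjoint]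
  intro hlam
  obtain ⟨i, q, -, hqb, hq⟩ := hcover lam hlam
  have hlamC : MT.IsCNode lam := by rcases hqb.eq_or_eq hq h.1 with rfl | rfl <;> exact hC _
  exact absurd (h.2.symm.trans hlamC.2) (by decide)

theorem IsFiveComponentOn.disjoint {c c' : Fin 5 → V} {K K' : Set V}
    (h : MT.IsFiveComponentOn c K) (h' : MT.IsFiveComponentOn c' K')
    (hd : Disjoint (Set.range c) (Set.range c')) : Disjoint K K' := by
  have hC := h.isCNode
  have hC' := h'.isCNode
  have hne k l : c k ≠ c' l := fun he => Set.disjoint_left.mp hd ⟨k, rfl⟩ ⟨l, he.symm⟩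
  obtain ⟨p, -, rfl, -, hcover⟩ := h.exists_path
  obtain ⟨p', -, rfl, -, hcover'⟩ := h'.exists_path
  refine disjoint_pathWithHangs (.inr (.inl (hC 0))) (.inr (.inl (hC' 0))) fun x hx hx' => ?_
  obtain ⟨i, q, hq, hqb, hxq⟩ := hcover x hx
  obtain ⟨j, q', hq', hq'b, hxq'⟩ := hcover' x hx'
  exact IsBranchFree.disjoint_support hq hqb hq' hq'b (hC _).1 (hC _).1 (hC' _).1
    (hne _ _) (hne _ _) (hne _ _) (hne _ _) hxq hxq'

end MarkedTree

/-- Let `T` be a marked tree.  The components of `T` are pairwise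
vertex-disjoint (distinct L-components are disjoint, an L-component is disjoint from any
5-component, and 5-components defined by disjoint quintuples of C-nodes — as in the partition
of each spine into groups of five — are disjoint); moreover every L-component contains exactly
two marked leaves and every 5-component contains exactly five marked leaves. -/
theorem components_disjoint_and_counts
    {V : Type*} [Fintype V] (MT : MarkedTree V) :
    (∀ lam lam' : V, MT.IsLNode lam → MT.IsLNode lam' → lam ≠ lam' →
      Disjoint (MT.LComponent lam) (MT.LComponent lam')) ∧
    (∀ (lam : V) (c : Fin 5 → V) (K : Set V), MT.IsLNode lam →
      MT.IsFiveComponentOn c K → Disjoint (MT.LComponent lam) K) ∧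
    (∀ (c c' : Fin 5 → V) (K K' : Set V), MT.IsFiveComponentOn c K →
      MT.IsFiveComponentOn c' K' → Disjoint (Set.range c) (Set.range c') →
      Disjoint K K') ∧
    (∀ lam : V, MT.IsLNode lam →
      Nat.card {i : Fin MT.n // i ∈ MT.marked ∧ (MT.ord i).1 ∈ MT.LComponent lam} = 2) ∧
    (∀ (c : Fin 5 → V) (K : Set V), MT.IsFiveComponentOn c K →
      Nat.card {i : Fin MT.n // i ∈ MT.marked ∧ (MT.ord i).1 ∈ K} = 5) :=
  ⟨fun _ _ h h' hne => h.disjoint_lComponent h' hne,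
    fun _ _ _ h h5 => h.disjoint_of_isFiveComponentOn h5,
    fun _ _ _ _ h h' hd => h.disjoint h' hd,
    fun _ h => h.card_marked,
    fun _ _ h => h.card_marked⟩
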